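/- arXiv:2402.10474 — 3 statements merged into one kernel-verified Lean document; each statement's English description precedes it below -/
import Mathlib

section
/- Let F : ℝ^d → ℝ be nonnegative, let f : ℝ^d → ℝ be nonnegative with f(0) = 0, and suppose there is a real q > 0 such that ‖w‖₂ ≤ q·f(w) for all w ∈ ℝ^d. Let ρ ≥ 0. Then both limits lim_{λ→∞} inf_w (F(w) + λ f(w)) and lim_{λ→∞} inf_w (ρ‖w‖₂² + F(w) + λ f(w)) exist and are equal. -/
open Filter

theorem stmt6 (d : ℕ) (F f : EuclideanSpace ℝ (Fin d) → ℝ)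
    (hF : ∀ w, 0 ≤ F w) (hf : ∀ w, 0 ≤ f w) (hf0 : f 0 = 0)
    (q : ℝ) (hq : 0 < q) (hqf : ∀ w : EuclideanSpace ℝ (Fin d), ‖w‖ ≤ q * f w)
    (ρ : ℝ) (hρ : 0 ≤ ρ) :
    ∃ L : ℝ,
      Tendsto (fun lam : ℝ => ⨅ w : EuclideanSpace ℝ (Fin d), (F w + lam * f w))
        atTop (nhds L) ∧
      Tendsto (fun lam : ℝ => ⨅ w : EuclideanSpace ℝ (Fin d),
          (ρ * ‖w‖ ^ 2 + F w + lam * f w))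
        atTop (nhds L) := by
  classical
  set h : ℝ → ℝ := fun lam => ⨅ w : EuclideanSpace ℝ (Fin d), (F w + lam * f w) with hh
  set g : ℝ → ℝ := fun lam =>
    ⨅ w : EuclideanSpace ℝ (Fin d), (ρ * ‖w‖ ^ 2 + F w + lam * f w) with hg
  have hbddh : ∀ lam : ℝ, 0 ≤ lam →
      BddBelow (Set.range fun w : EuclideanSpace ℝ (Fin d) => F w + lam * f w) := by
    intro lam hlam
    refine ⟨0, ?_⟩
    rintro x ⟨w, rfl⟩
    exact add_nonneg (hF w) (mul_nonneg hlam (hf w))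
  have hbddg : ∀ lam : ℝ, 0 ≤ lam →
      BddBelow (Set.range fun w : EuclideanSpace ℝ (Fin d) =>
        ρ * ‖w‖ ^ 2 + F w + lam * f w) := by
    intro lam hlam
    refine ⟨0, ?_⟩
    rintro x ⟨w, rfl⟩
    exact add_nonneg (add_nonneg (mul_nonneg hρ (sq_nonneg ‖w‖)) (hF w))
      (mul_nonneg hlam (hf w))
  -- h and g bounded above by F 0
  have hhub : ∀ lam : ℝ, 0 ≤ lam → h lam ≤ F 0 := by
    intro lam hlam
    have := ciInf_le (hbddh lam hlam) (0 : EuclideanSpace ℝ (Fin d))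
    simpa [hh, hf0] using this
  have hgub : ∀ lam : ℝ, 0 ≤ lam → g lam ≤ F 0 := by
    intro lam hlam
    have := ciInf_le (hbddg lam hlam) (0 : EuclideanSpace ℝ (Fin d))
    simpa [hg, hf0] using this
  -- monotonicity on [0, ∞)
  have hmonoh : ∀ a b : ℝ, 0 ≤ a → a ≤ b → h a ≤ h b := by
    intro a b ha hab
    refine ciInf_mono (hbddh a ha) fun w => ?_
    have := mul_le_mul_of_nonneg_right hab (hf w)
    linarith
  have hmonog : ∀ a b : ℝ, 0 ≤ a → a ≤ b → g a ≤ g b := by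
    intro a b ha hab
    refine ciInf_mono (hbddg a ha) fun w => ?_
    have := mul_le_mul_of_nonneg_right hab (hf w)
    linarith
  -- truncated versions, monotone everywhere
  set H : ℝ → ℝ := fun x => h (max x 0) with hH
  set G : ℝ → ℝ := fun x => g (max x 0) with hG
  have hHmono : Monotone H := fun a b hab =>
    hmonoh _ _ (le_max_right _ _) (max_le_max hab le_rfl)
  have hGmono : Monotone G := fun a b hab =>
    hmonog _ _ (le_max_right _ _) (max_le_max hab le_rfl)
  have hHbdd : BddAbove (Set.range H) :=
    ⟨F 0, by rintro x ⟨y, rfl⟩; exact hhub _ (le_max_right _ _)⟩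
  have hGbdd : BddAbove (Set.range G) :=
    ⟨F 0, by rintro x ⟨y, rfl⟩; exact hgub _ (le_max_right _ _)⟩
  set LH := ⨆ x, H x with hLH
  set LG := ⨆ x, G x with hLG
  have hHt : Tendsto H atTop (nhds LH) := tendsto_atTop_ciSup hHmono hHbdd
  have hGt : Tendsto G atTop (nhds LG) := tendsto_atTop_ciSup hGmono hGbdd
  have heqH : H =ᶠ[atTop] h := by
    filter_upwards [eventually_ge_atTop (0 : ℝ)] with x hx
    simp [hH, max_eq_left hx]
  have heqG : G =ᶠ[atTop] g := by
    filter_upwards [eventually_ge_atTop (0 : ℝ)] with x hx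
    simp [hG, max_eq_left hx]
  have hht : Tendsto h atTop (nhds LH) := hHt.congr' heqH
  have hgt : Tendsto g atTop (nhds LG) := hGt.congr' heqG
  -- LH ≤ LG
  have hle1 : LH ≤ LG := by
    refine le_of_tendsto_of_tendsto hht hgt ?_
    filter_upwards [eventually_ge_atTop (0 : ℝ)] with lam hlam
    refine ciInf_mono (hbddh lam hlam) fun w => ?_
    have := mul_nonneg hρ (sq_nonneg ‖w‖)
    linarith
  -- LG ≤ LH
  have hle2 : LG ≤ LH := by
    refine le_of_forall_pos_le_add fun ε hε => ?_
    have hshift : Tendsto (fun lam : ℝ => h (lam + ρ * q ^ 2) + ε) atTop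
        (nhds (LH + ε)) := by
      have hmap : Tendsto (fun lam : ℝ => lam + ρ * q ^ 2) atTop atTop :=
        tendsto_atTop_add_const_right _ _ tendsto_id
      exact (hht.comp hmap).add_const ε
    refine le_of_tendsto_of_tendsto hgt hshift ?_
    filter_upwards [eventually_ge_atTop (0 : ℝ),
      eventually_ge_atTop (F 0 + ε)] with lam hlam hlam2
    set μ := lam + ρ * q ^ 2 with hμ
    have hρq := mul_nonneg hρ (sq_nonneg q)
    have hμ0 : 0 ≤ μ := by rw [hμ]; linarith
    have hμF : F 0 + ε ≤ μ := by rw [hμ]; linarith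
    have hμpos : 0 < μ := lt_of_lt_of_le (by linarith [hF 0]) hμF
    have hub : h μ ≤ F 0 := hhub μ hμ0
    have hlt : h μ < h μ + ε := by linarith
    obtain ⟨w, hw⟩ := exists_lt_of_ciInf_lt hlt
    have hw' : F w + μ * f w < h μ + ε := hw
    have hfw1 : f w ≤ 1 := by
      by_contra hcon
      push_neg at hcon
      have hmul : μ * 1 < μ * f w := mul_lt_mul_of_pos_left hcon hμpos
      have := hF w
      linarith
    have h1 : ‖w‖ * ‖w‖ ≤ (q * f w) * (q * f w) :=
      mul_self_le_mul_self (norm_nonneg w) (hqf w)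
    have h2 : f w * f w ≤ f w := by nlinarith [hf w]
    have h3 := mul_le_mul_of_nonneg_left h1 hρ
    have h4 := mul_le_mul_of_nonneg_left h2 (mul_nonneg hρ (sq_nonneg q))
    have hnorm : ρ * ‖w‖ ^ 2 ≤ ρ * q ^ 2 * f w := by nlinarith [h3, h4]
    have hgle : g lam ≤ ρ * ‖w‖ ^ 2 + F w + lam * f w :=
      ciInf_le (hbddg lam hlam) w
    calc g lam ≤ ρ * ‖w‖ ^ 2 + F w + lam * f w := hgle
      _ ≤ F w + μ * f w := by rw [hμ]; nlinarith [hf w]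
      _ ≤ h μ + ε := le_of_lt hw'
  have hLGH : LG = LH := le_antisymm hle2 hle1
  rw [hLGH] at hgt
  exact ⟨LH, hht, hgt⟩
end

section
/- Let h : ℝ^d → ℝ be convex, let ε > 0, and define h^ε(w) = h(w) + ε‖w‖². Suppose w* is a global minimizer of h^ε over ℝ^d, let ψ : ℝ^d → ℝ be L-Lipschitz with L > 0, and let η > 0. Then every w ∈ ℝ^d with |ψ(w) − ψ(w*)| ≥ η satisfies h^ε(w) ≥ h^ε(w*) + εη²/L². -/
open scoped RealInnerProductSpace

lemma norm_combo_sq {d : ℕ} (a b : EuclideanSpace ℝ (Fin d)) (t : ℝ) :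
    ‖(1 - t) • a + t • b‖ ^ 2 =
      (1 - t) * ‖a‖ ^ 2 + t * ‖b‖ ^ 2 - t * (1 - t) * ‖b - a‖ ^ 2 := by
  have h1 : ‖(1 - t) • a + t • b‖ ^ 2 = ⟪(1 - t) • a + t • b, (1 - t) • a + t • b⟫ :=
    (real_inner_self_eq_norm_sq _).symm
  have h2 : ‖b - a‖ ^ 2 = ⟪b - a, b - a⟫ := (real_inner_self_eq_norm_sq _).symm
  have ha : ‖a‖ ^ 2 = ⟪a, a⟫ := (real_inner_self_eq_norm_sq _).symm
  have hb : ‖b‖ ^ 2 = ⟪b, b⟫ := (real_inner_self_eq_norm_sq _).symm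
  rw [h1, h2, ha, hb]
  simp only [inner_add_add_self, inner_sub_sub_self, real_inner_smul_left,
    real_inner_smul_right, real_inner_comm a b]
  ring

theorem stmt9 (d : ℕ)
    (h : EuclideanSpace ℝ (Fin d) → ℝ)
    (hconv : ConvexOn ℝ Set.univ h)
    (ε : ℝ) (hε : 0 < ε)
    (wstar : EuclideanSpace ℝ (Fin d))
    (hmin : ∀ w : EuclideanSpace ℝ (Fin d),
      h wstar + ε * ‖wstar‖ ^ 2 ≤ h w + ε * ‖w‖ ^ 2)
    (ψ : EuclideanSpace ℝ (Fin d) → ℝ) (L : ℝ) (hL : 0 < L)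
    (hψ : ∀ u v : EuclideanSpace ℝ (Fin d), |ψ u - ψ v| ≤ L * ‖u - v‖)
    (η : ℝ) (hη : 0 < η) :
    ∀ w : EuclideanSpace ℝ (Fin d), η ≤ |ψ w - ψ wstar| →
      h wstar + ε * ‖wstar‖ ^ 2 + ε * η ^ 2 / L ^ 2 ≤ h w + ε * ‖w‖ ^ 2 := by
  intro w hw
  -- distance bound
  have hdist : η / L ≤ ‖w - wstar‖ := by
    rw [div_le_iff₀' hL]
    exact hw.trans (hψ w wstar)
  have hd2 : η ^ 2 / L ^ 2 ≤ ‖w - wstar‖ ^ 2 := by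
    rw [← div_pow]
    exact pow_le_pow_left₀ (by positivity) hdist 2
  -- strong convexity gap: for all t ∈ (0,1), ε * (1-t) * ‖w - wstar‖^2 ≤ gap
  have key : ∀ t : ℝ, 0 < t →
      ε * (1 - t) * ‖w - wstar‖ ^ 2 ≤ (h w + ε * ‖w‖ ^ 2) - (h wstar + ε * ‖wstar‖ ^ 2) := by
    intro t ht0
    rcases le_or_gt 1 t with ht1 | ht1
    · have h1 : ε * (1 - t) * ‖w - wstar‖ ^ 2 ≤ 0 := by
        apply mul_nonpos_of_nonpos_of_nonneg
        · nlinarith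
        · positivity
      linarith [hmin w]
    · have hmem := hconv.2 (Set.mem_univ wstar) (Set.mem_univ w)
        (le_of_lt (by linarith : (0:ℝ) < 1 - t)) ht0.le (by ring)
      rw [smul_eq_mul, smul_eq_mul] at hmem
      have hnorm := norm_combo_sq wstar w t
      have hm := hmin ((1 - t) • wstar + t • w)
      have step : t * (ε * (1 - t) * ‖w - wstar‖ ^ 2)
          ≤ t * ((h w + ε * ‖w‖ ^ 2) - (h wstar + ε * ‖wstar‖ ^ 2)) := by nlinarith
      exact le_of_mul_le_mul_left step ht0
  have key' : ε * ‖w - wstar‖ ^ 2 ≤ (h w + ε * ‖w‖ ^ 2) - (h wstar + ε * ‖wstar‖ ^ 2) := by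
    have htend : Filter.Tendsto (fun t : ℝ => ε * (1 - t) * ‖w - wstar‖ ^ 2)
        (nhdsWithin 0 (Set.Ioi (0:ℝ))) (nhds (ε * ‖w - wstar‖ ^ 2)) := by
      have : Filter.Tendsto (fun t : ℝ => ε * (1 - t) * ‖w - wstar‖ ^ 2)
          (nhds 0) (nhds (ε * (1 - 0) * ‖w - wstar‖ ^ 2)) := by
        apply Continuous.tendsto
        continuity
      simpa using this.mono_left nhdsWithin_le_nhds
    refine le_of_tendsto htend ?_
    filter_upwards [self_mem_nhdsWithin] with t ht
    exact key t ht
  have : ε * (η ^ 2 / L ^ 2) ≤ ε * ‖w - wstar‖ ^ 2 := by gcongr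
  have heq : ε * η ^ 2 / L ^ 2 = ε * (η ^ 2 / L ^ 2) := by ring
  linarith
end

section
/- Let G be a standard real Gaussian random variable, and let Ξ > 0 and λ ≥ 0. Then E[ST(ΞG; λ)²] = 2Q(λ/Ξ)·(Ξ² + λ²) − (2Ξλ/√(2π))·exp(−λ²/(2Ξ²)). -/
/-!
Write `t = λ/Ξ`. Soft thresholding is positively homogeneous, so `ST(ΞG; λ)² = Ξ² ST(G; t)²`,
and `ST(x; t)² = (x - t)₊² + (-x - t)₊²`. As `G` and `-G` have the same law, the expectation is
`2Ξ² E[(G - t)₊²]`. With `φ` the standard Gaussian density, `φ' = -x φ` gives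
`(x - t)² φ = ((2t - x) φ)' + (1 + t²) φ`, and integrating over `(t, ∞)` yields
`E[(G - t)₊²] = (1 + t²) Q(t) - t φ(t)`, which is the claim.
-/

open MeasureTheory ProbabilityTheory

/-- The soft-thresholding operator `softThr(x; c)`. -/
noncomputable def softThr (x c : ℝ) : ℝ :=
  if c < x then x - c else if x < -c then x + c else 0

/-- Gaussian tail probability `Q(t) = P(G > t)` for a standard Gaussian `G`. -/
noncomputable def gaussQ (t : ℝ) : ℝ := (gaussianReal 0 1 {x | t < x}).toReal

open Real Set
open scoped NNReal

lemma softThr_mul {a : ℝ} (ha : 0 < a) (x c : ℝ) :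
    softThr (a * x) (a * c) = a * softThr x c := by
  simp only [softThr, mul_lt_mul_iff_right₀ ha, ← mul_neg]
  split_ifs <;> ring

lemma sq_softThr (x : ℝ) {c : ℝ} (hc : 0 ≤ c) :
    softThr x c ^ 2 = max (x - c) 0 ^ 2 + max (-x - c) 0 ^ 2 := by
  unfold softThr
  split_ifs
  · rw [max_eq_left (by linarith), max_eq_right (by linarith)]; ring
  · rw [max_eq_right (by linarith), max_eq_left (by linarith)]; ring
  · rw [max_eq_right (by linarith), max_eq_right (by linarith)]; ring

namespace ProbabilityTheory

instance (v : ℝ≥0) : (gaussianReal 0 v).IsNegInvariant :=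
  ⟨by rw [Measure.neg_def, gaussianReal_map_neg, neg_zero]⟩

lemma hasDerivAt_gaussianPDFReal (μ : ℝ) (v : ℝ≥0) (x : ℝ) :
    HasDerivAt (gaussianPDFReal μ v) (-(x - μ) / v * gaussianPDFReal μ v x) x := by
  have h := ((((hasDerivAt_id' x).sub_const μ).fun_pow 2).fun_neg.div_const
    (2 * (v : ℝ))).exp.const_mul (√(2 * π * v))⁻¹
  refine h.congr_deriv ?_
  simp only [gaussianPDFReal]
  push_cast
  ring

lemma integrable_quadratic_gaussianReal (μ : ℝ) (v : ℝ≥0) (a b c : ℝ) :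
    Integrable (fun x => a * x ^ 2 + b * x + c) (gaussianReal μ v) :=
  have hsq : Integrable (fun x => x ^ 2) (gaussianReal μ v) :=
    (memLp_id_gaussianReal 2).integrable_sq
  have hid : Integrable (fun x => x) (gaussianReal μ v) :=
    memLp_one_iff_integrable.1 (memLp_id_gaussianReal 1)
  ((hsq.const_mul a).add (hid.const_mul b)).add (integrable_const c)

lemma integrable_gaussianPDFReal_mul_iff {μ : ℝ} {v : ℝ≥0} (hv : v ≠ 0) {f : ℝ → ℝ} :
    Integrable (fun x => gaussianPDFReal μ v x * f x) ↔ Integrable f (gaussianReal μ v) := by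
  rw [gaussianReal_of_var_ne_zero _ hv, integrable_withDensity_iff_integrable_smul'
    (measurable_gaussianPDF _ _) (ae_of_all _ fun _ => gaussianPDF_lt_top)]
  simp [toReal_gaussianPDF]

lemma integrable_gaussianPDFReal_mul_quadratic (μ : ℝ) (v : ℝ≥0) (a b c : ℝ) :
    Integrable (fun x => gaussianPDFReal μ v x * (a * x ^ 2 + b * x + c)) := by
  rcases eq_or_ne v 0 with rfl | hv
  · simp
  · exact (integrable_gaussianPDFReal_mul_iff hv).2 (integrable_quadratic_gaussianReal μ v a b c)

lemma integrable_posPart_sub_sq_gaussianReal (μ : ℝ) (v : ℝ≥0) (t : ℝ) :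
    Integrable (fun x => max (x - t) 0 ^ 2) (gaussianReal μ v) := by
  refine (integrable_quadratic_gaussianReal μ v 1 (-2 * t) (t ^ 2)).mono' (by fun_prop)
    (ae_of_all _ fun x => ?_)
  rw [Real.norm_of_nonneg (sq_nonneg _)]
  rcases max_cases (x - t) 0 with ⟨h, -⟩ | ⟨h, -⟩ <;> rw [h] <;> nlinarith [sq_nonneg (x - t)]

end ProbabilityTheory

lemma gaussQ_eq_integral (t : ℝ) : gaussQ t = ∫ x in Ioi t, gaussianPDFReal 0 1 x := by
  rw [gaussQ, gaussianReal_apply_eq_integral 0 one_ne_zero,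
    ENNReal.toReal_ofReal (integral_nonneg fun x => gaussianPDFReal_nonneg _ _ _)]
  rfl

lemma integral_Ioi_gaussianPDFReal_mul_sub_sq (t : ℝ) :
    ∫ x in Ioi t, gaussianPDFReal 0 1 x * (x - t) ^ 2
      = (1 + t ^ 2) * gaussQ t - t * gaussianPDFReal 0 1 t := by
  set φ := gaussianPDFReal 0 1
  -- Since `φ' x = -x * φ x`, the integrand is `F' + (1 + t²) φ` with `F y = φ y * (2t - y)`.
  have hF : ∀ x, HasDerivAt (fun y => φ y * (2 * t - y)) (φ x * (x ^ 2 - 2 * t * x - 1)) x :=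
    fun x => ((hasDerivAt_gaussianPDFReal 0 1 x).mul
      ((hasDerivAt_id' x).const_sub (2 * t))).congr_deriv (by push_cast; ring)
  have hFint : Integrable (fun x => φ x * (2 * t - x)) :=
    (integrable_gaussianPDFReal_mul_quadratic 0 1 0 (-1) (2 * t)).congr
      (ae_of_all _ fun x => by ring)
  have hF'int : Integrable (fun x => φ x * (x ^ 2 - 2 * t * x - 1)) :=
    (integrable_gaussianPDFReal_mul_quadratic 0 1 1 (-2 * t) (-1)).congr
      (ae_of_all _ fun x => by ring)
  have hlim := tendsto_zero_of_hasDerivAt_of_integrableOn_Ioi (a := t) (fun x _ => hF x)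
    hF'int.integrableOn hFint.integrableOn
  have hFTC := integral_Ioi_of_hasDerivAt_of_tendsto' (a := t) (fun x _ => hF x)
    hF'int.integrableOn hlim
  calc ∫ x in Ioi t, φ x * (x - t) ^ 2
      = ∫ x in Ioi t, (φ x * (x ^ 2 - 2 * t * x - 1) + (1 + t ^ 2) * φ x) := by
        congr 1; ext x; ring
    _ = (1 + t ^ 2) * gaussQ t - t * φ t := by
        rw [integral_add hF'int.integrableOn
          ((integrable_gaussianPDFReal 0 1).const_mul _).integrableOn, hFTC, integral_const_mul,
          gaussQ_eq_integral]
        ring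

lemma integral_posPart_sub_sq_gaussianReal (t : ℝ) :
    ∫ x, max (x - t) 0 ^ 2 ∂gaussianReal 0 1
      = (1 + t ^ 2) * gaussQ t - t * gaussianPDFReal 0 1 t := by
  rw [integral_gaussianReal_eq_integral_smul one_ne_zero,
    ← integral_Ioi_gaussianPDFReal_mul_sub_sq, ← integral_indicator measurableSet_Ioi]
  congr 1
  ext x
  by_cases hx : t < x
  · simp [hx, hx.le]
  · simp [hx, not_lt.1 hx]

theorem stmt13 (Ξ lam : ℝ) (hΞ : 0 < Ξ) (hlam : 0 ≤ lam) :
    ∫ g : ℝ, (softThr (Ξ * g) lam) ^ 2 ∂(gaussianReal 0 1)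
      = 2 * gaussQ (lam / Ξ) * (Ξ ^ 2 + lam ^ 2)
        - (2 * Ξ * lam / Real.sqrt (2 * Real.pi)) * Real.exp (-lam ^ 2 / (2 * Ξ ^ 2)) := by
  set t := lam / Ξ
  have hlam_eq : lam = Ξ * t := (mul_div_cancel₀ lam hΞ.ne').symm
  have ht : 0 ≤ t := div_nonneg hlam hΞ.le
  have hint := integrable_posPart_sub_sq_gaussianReal 0 1 t
  calc ∫ g, softThr (Ξ * g) lam ^ 2 ∂gaussianReal 0 1
      = Ξ ^ 2 * ∫ g, (max (g - t) 0 ^ 2 + max (-g - t) 0 ^ 2) ∂gaussianReal 0 1 := by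
        rw [← integral_const_mul]
        congr 1; ext g
        rw [hlam_eq, softThr_mul hΞ, mul_pow, sq_softThr _ ht]
    _ = 2 * Ξ ^ 2 * ((1 + t ^ 2) * gaussQ t - t * gaussianPDFReal 0 1 t) := by
        rw [integral_add hint hint.comp_neg, integral_neg_eq_self (fun g => max (g - t) 0 ^ 2),
          integral_posPart_sub_sq_gaussianReal]
        ring
    _ = _ := by
        simp only [gaussianPDFReal, NNReal.coe_one, mul_one, sub_zero, t]
        field_simp
end
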